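/- arXiv:1805.04027 — 5 statements merged into one kernel-verified Lean document; each statement's English description precedes it below -/
import Mathlib

section
/- Let U be a compact metric space and ν a finite signed Borel measure on U with ν(U) = 0. Then sup { ∫ φ dν : φ 1-Lipschitz } ≤ (1 + D_U) ‖ν‖_BL, where D_U = min_{x₀∈U} max_{x₁∈U} d(x₀,x₁). In particular, for probability measures μ₁, μ₂ on U, ‖μ₁ − μ₂‖_BL ≤ W₁(μ₁, μ₂) ≤ (1 + D_U) ‖μ₁ − μ₂‖_BL. -/
open MeasureTheory

/-- The (least) Lipschitz constant of a real function on a metric space. -/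
noncomputable def lipConst {U : Type*} [MetricSpace U] (f : U → ℝ) : ℝ :=
  sInf {K : ℝ | 0 ≤ K ∧ ∀ u v, |f u - f v| ≤ K * dist u v}

/-- The bounded Lipschitz norm `sup|f| + Lip(f)` of a real function. -/
noncomputable def lipNorm {U : Type*} [MetricSpace U] (f : U → ℝ) : ℝ :=
  (⨆ u, |f u|) + lipConst f

/-- The dual bounded Lipschitz (BL) norm of a functional `I`. -/
noncomputable def blNormOf {U : Type*} [MetricSpace U] (I : (U → ℝ) → ℝ) : ℝ :=
  sSup {r : ℝ | ∃ φ : U → ℝ, (∃ K, LipschitzWith K φ) ∧ lipNorm φ ≤ 1 ∧ r = I φ}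

/-- Integration of a test function against a finite signed measure, via its
Jordan decomposition. -/
noncomputable def pairSM {α : Type*} [MeasurableSpace α]
    (ν : SignedMeasure α) (φ : α → ℝ) : ℝ :=
  ∫ u, φ u ∂ν.toJordanDecomposition.posPart -
    ∫ u, φ u ∂ν.toJordanDecomposition.negPart

/-- `D_U = min_{x₀} max_{x₁} d(x₀,x₁)`. -/
noncomputable def DU (U : Type*) [MetricSpace U] : ℝ :=
  ⨅ x₀ : U, ⨆ x₁ : U, dist x₀ x₁

/-!
Both functionals are `φ ↦ ∫ φ dμ - ∫ φ dν` for finite measures `μ, ν` of equal mass (for a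
signed measure, its Jordan parts). Since the infimum defining `D_U` is attained at some `x₀`,
a 1-Lipschitz `φ` gives the test function `(φ - φ x₀) / (1 + D_U)`, with sup norm at most
`D_U / (1 + D_U)` and Lipschitz constant at most `1 / (1 + D_U)`, hence BL norm at most `1`;
equal masses make the shift by `φ x₀` invisible. Conversely every test function of BL norm at
most `1` is 1-Lipschitz.
-/

section LipConst

variable {U : Type*} [MetricSpace U] {f : U → ℝ}

lemma lipConst_le {K : ℝ} (hK : 0 ≤ K) (h : ∀ u v, |f u - f v| ≤ K * dist u v) :
    lipConst f ≤ K :=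
  csInf_le ⟨0, fun _ hk => hk.1⟩ ⟨hK, h⟩

lemma LipschitzWith.abs_sub_le_lipConst_mul {K : NNReal} (hf : LipschitzWith K f) (u v : U) :
    |f u - f v| ≤ lipConst f * dist u v := by
  rcases eq_or_ne u v with rfl | huv
  · simp
  have hd : 0 < dist u v := dist_pos.2 huv
  rw [← div_le_iff₀ hd]
  refine le_csInf ⟨K, K.coe_nonneg, fun u v => ?_⟩ fun k hk => (div_le_iff₀ hd).2 (hk.2 u v)
  simpa [Real.dist_eq] using hf.dist_le_mul u v

lemma lipNorm_le_add [Nonempty U] {a K : ℝ} (hbound : ∀ u, |f u| ≤ a) (hK : 0 ≤ K)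
    (hlip : ∀ u v, |f u - f v| ≤ K * dist u v) : lipNorm f ≤ a + K :=
  add_le_add (ciSup_le hbound) (lipConst_le hK hlip)

lemma LipschitzWith.lipschitzWith_one_of_lipNorm_le_one {K : NNReal} (hf : LipschitzWith K f)
    (hnorm : lipNorm f ≤ 1) : LipschitzWith 1 f := by
  have hsup : 0 ≤ ⨆ u, |f u| := Real.iSup_nonneg fun u => abs_nonneg _
  have hlip : lipConst f ≤ 1 := by unfold lipNorm at hnorm; linarith
  refine LipschitzWith.of_dist_le_mul fun u v => ?_
  rw [Real.dist_eq, NNReal.coe_one, one_mul]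
  exact (hf.abs_sub_le_lipConst_mul u v).trans (mul_le_of_le_one_left dist_nonneg hlip)

lemma LipschitzWith.abs_le_one_of_lipNorm_le_one [CompactSpace U] {K : NNReal}
    (hf : LipschitzWith K f) (hnorm : lipNorm f ≤ 1) (u : U) : |f u| ≤ 1 := by
  have hlip : 0 ≤ lipConst f := Real.sInf_nonneg fun _ hk => hk.1
  have hsup : |f u| ≤ ⨆ v, |f v| :=
    le_ciSup (isCompact_range hf.continuous.abs).bddAbove u
  unfold lipNorm at hnorm
  linarith

end LipConst

lemma exists_forall_dist_le_DU (U : Type*) [MetricSpace U] [CompactSpace U] [Nonempty U] :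
    ∃ x₀ : U, ∀ u, dist x₀ u ≤ DU U := by
  have hbdd : ∀ x : U, BddAbove (Set.range (dist x)) := fun x =>
    (isCompact_range (continuous_const.dist continuous_id)).bddAbove
  have hcont : Continuous fun x : U => ⨆ y, dist x y := by
    refine (LipschitzWith.of_le_add fun x z => ciSup_le fun y => ?_).continuous
    calc dist x y ≤ dist z y + dist x z := by linarith [dist_triangle x z y]
      _ ≤ (⨆ y, dist z y) + dist x z := by gcongr; exact le_ciSup (hbdd z) y
  obtain ⟨x₀, -, hmin⟩ := isCompact_univ.exists_isMinOn Set.univ_nonempty hcont.continuousOn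
  exact ⟨x₀, fun u => (le_ciSup (hbdd x₀) u).trans (le_ciInf fun x => hmin (Set.mem_univ x))⟩

section IntegralDiff

open Set

variable {U : Type*} [MeasurableSpace U] (μ ν : Measure U)

noncomputable def integralDiff (φ : U → ℝ) : ℝ :=
  ∫ u, φ u ∂μ - ∫ u, φ u ∂ν

lemma integralDiff_div (φ : U → ℝ) (c : ℝ) :
    integralDiff μ ν (fun u => φ u / c) = integralDiff μ ν φ / c := by
  simp only [integralDiff, integral_div, sub_div]

variable [IsFiniteMeasure μ] [IsFiniteMeasure ν]

lemma integralDiff_sub_const (hmass : μ.real univ = ν.real univ) {φ : U → ℝ}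
    (hμ : Integrable φ μ) (hν : Integrable φ ν) (c : ℝ) :
    integralDiff μ ν (fun u => φ u - c) = integralDiff μ ν φ := by
  simp only [integralDiff, integral_sub hμ (integrable_const c),
    integral_sub hν (integrable_const c), integral_const, hmass]
  ring

lemma integralDiff_le_of_abs_le_one {φ : U → ℝ} (hφ : ∀ u, |φ u| ≤ 1) :
    integralDiff μ ν φ ≤ μ.real univ + ν.real univ := by
  have hbound {ρ : Measure U} [IsFiniteMeasure ρ] : |∫ u, φ u ∂ρ| ≤ ρ.real univ := by
    simpa using norm_integral_le_of_norm_le_const (μ := ρ) (C := 1)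
      (.of_forall fun u => (Real.norm_eq_abs _).trans_le (hφ u))
  have h₁ := (abs_le.1 (hbound (ρ := μ))).2
  have h₂ := (abs_le.1 (hbound (ρ := ν))).1
  unfold integralDiff
  linarith

variable [MetricSpace U] [CompactSpace U]

lemma bddAbove_blNorm_integralDiff :
    BddAbove {r : ℝ | ∃ φ : U → ℝ, (∃ K, LipschitzWith K φ) ∧ lipNorm φ ≤ 1 ∧
      r = integralDiff μ ν φ} := by
  refine ⟨μ.real univ + ν.real univ, ?_⟩
  rintro _ ⟨φ, ⟨K, hφ⟩, hnorm, rfl⟩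
  exact integralDiff_le_of_abs_le_one μ ν (hφ.abs_le_one_of_lipNorm_le_one hnorm)

variable [Nonempty U] [OpensMeasurableSpace U] {μ ν}

theorem LipschitzWith.integralDiff_le_one_add_DU_mul_blNormOf
    (hmass : μ.real univ = ν.real univ) {φ : U → ℝ} (hφ : LipschitzWith 1 φ) :
    integralDiff μ ν φ ≤ (1 + DU U) * blNormOf (integralDiff μ ν) := by
  obtain ⟨x₀, hx₀⟩ := exists_forall_dist_le_DU U
  have hc : 0 < 1 + DU U := by linarith [(dist_self x₀).symm.le.trans (hx₀ x₀)]
  set ψ : U → ℝ := fun u => (φ u - φ x₀) / (1 + DU U)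
  have hφ_dist : ∀ u v, |φ u - φ v| ≤ dist u v := fun u v => by
    simpa [Real.dist_eq] using hφ.dist_le_mul u v
  have hψ_lip : ∀ u v, |ψ u - ψ v| ≤ (1 + DU U)⁻¹ * dist u v := fun u v => by
    rw [← sub_div, sub_sub_sub_cancel_right, abs_div, abs_of_pos hc, div_eq_inv_mul]
    exact mul_le_mul_of_nonneg_left (hφ_dist u v) (inv_nonneg.2 hc.le)
  have hψ_bound : ∀ u, |ψ u| ≤ DU U / (1 + DU U) := fun u => by
    rw [abs_div, abs_of_pos hc]
    gcongr
    exact (hφ_dist u x₀).trans (dist_comm u x₀ ▸ hx₀ u)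
  have hψ_norm : lipNorm ψ ≤ 1 :=
    (lipNorm_le_add hψ_bound (inv_nonneg.2 hc.le) hψ_lip).trans_eq (by field_simp; ring)
  have hψ_mem : integralDiff μ ν ψ ≤ blNormOf (integralDiff μ ν) :=
    le_csSup (bddAbove_blNorm_integralDiff μ ν)
      ⟨ψ, ⟨_, LipschitzWith.of_dist_le' fun u v => by simpa [Real.dist_eq] using hψ_lip u v⟩,
        hψ_norm, rfl⟩
  have hφ_int {ρ : Measure U} [IsFiniteMeasure ρ] : Integrable φ ρ :=
    hφ.continuous.integrable_of_hasCompactSupport (HasCompactSupport.of_compactSpace φ)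
  rw [integralDiff_div, integralDiff_sub_const μ ν hmass hφ_int hφ_int, div_le_iff₀ hc] at hψ_mem
  linarith

theorem sSup_integralDiff_le_one_add_DU_mul_blNormOf (hmass : μ.real univ = ν.real univ) :
    sSup {r : ℝ | ∃ φ : U → ℝ, LipschitzWith 1 φ ∧ r = integralDiff μ ν φ} ≤
      (1 + DU U) * blNormOf (integralDiff μ ν) := by
  refine csSup_le ⟨_, fun _ => 0, LipschitzWith.const' 0, rfl⟩ ?_
  rintro _ ⟨φ, hφ, rfl⟩
  exact hφ.integralDiff_le_one_add_DU_mul_blNormOf hmass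

theorem blNormOf_integralDiff_le_sSup (hmass : μ.real univ = ν.real univ) :
    blNormOf (integralDiff μ ν) ≤
      sSup {r : ℝ | ∃ φ : U → ℝ, LipschitzWith 1 φ ∧ r = integralDiff μ ν φ} := by
  have hbdd : BddAbove {r : ℝ | ∃ φ : U → ℝ, LipschitzWith 1 φ ∧ r = integralDiff μ ν φ} := by
    refine ⟨(1 + DU U) * blNormOf (integralDiff μ ν), ?_⟩
    rintro _ ⟨φ, hφ, rfl⟩
    exact hφ.integralDiff_le_one_add_DU_mul_blNormOf hmass
  have hzero : lipNorm (fun _ : U => (0 : ℝ)) ≤ 1 :=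
    (lipNorm_le_add (a := 0) (fun _ => by simp) le_rfl fun _ _ => by simp).trans (by norm_num)
  refine csSup_le ⟨_, fun _ => 0, ⟨0, LipschitzWith.const 0⟩, hzero, rfl⟩ ?_
  rintro _ ⟨φ, ⟨K, hφ⟩, hnorm, rfl⟩
  exact le_csSup hbdd ⟨φ, hφ.lipschitzWith_one_of_lipNorm_le_one hnorm, rfl⟩

end IntegralDiff

/-- For a finite signed measure `ν` with `ν(U) = 0` on a compact metric space,
`sup {∫φ dν : φ 1-Lipschitz} ≤ (1 + D_U)‖ν‖_BL`; in particular, for probability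
measures `μ₁, μ₂`, `‖μ₁ − μ₂‖_BL ≤ W₁(μ₁,μ₂) ≤ (1 + D_U)‖μ₁ − μ₂‖_BL`. -/
theorem stmt2 {U : Type*} [MetricSpace U] [CompactSpace U] [Nonempty U]
    [MeasurableSpace U] [BorelSpace U]
    (ν : SignedMeasure U) (hν : ν Set.univ = 0) :
    (sSup {r : ℝ | ∃ φ : U → ℝ, LipschitzWith 1 φ ∧ r = pairSM ν φ} ≤
        (1 + DU U) * blNormOf (pairSM ν)) ∧
    (∀ μ₁ μ₂ : Measure U, IsProbabilityMeasure μ₁ → IsProbabilityMeasure μ₂ →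
      blNormOf (fun φ => ∫ u, φ u ∂μ₁ - ∫ u, φ u ∂μ₂) ≤
          sSup {r : ℝ | ∃ φ : U → ℝ, LipschitzWith 1 φ ∧
            r = ∫ u, φ u ∂μ₁ - ∫ u, φ u ∂μ₂} ∧
        sSup {r : ℝ | ∃ φ : U → ℝ, LipschitzWith 1 φ ∧
            r = ∫ u, φ u ∂μ₁ - ∫ u, φ u ∂μ₂} ≤
          (1 + DU U) * blNormOf (fun φ => ∫ u, φ u ∂μ₁ - ∫ u, φ u ∂μ₂)) := by
  refine ⟨?_, fun μ₁ μ₂ _ _ => ?_⟩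
  · have hmass := ν.apply_eq_posPart_real_sub_negPart_real MeasurableSet.univ
    rw [hν, eq_comm, sub_eq_zero] at hmass
    exact sSup_integralDiff_le_one_add_DU_mul_blNormOf hmass
  · have hmass : μ₁.real Set.univ = μ₂.real Set.univ := by simp
    exact ⟨blNormOf_integralDiff_le_sSup hmass,
      sSup_integralDiff_le_one_add_DU_mul_blNormOf hmass⟩
end

section
/- Let Y be a separable Banach space and μ, ν Borel probability measures on Y with finite first moment. Then sup { ∫ φ dμ − ∫ φ dν : φ ∈ C¹_b(Y), Lip(φ) ≤ 1 } = W₁(μ, ν), i.e., the C¹-smooth dual distance coincides with the 1-Wasserstein distance. -/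
/-!
Each value `∫ φ ∂μ - ∫ φ ∂ν` of a bounded 1-Lipschitz `φ` is approximated from below, up to any
`ε > 0`, by such a value of a bounded smooth 1-Lipschitz function; hence both sets of reals have
the same upper bounds and the same supremum.

To approximate `φ` in `L¹(μ + ν)`, use separability to cover all of `Y` but a set of small mass
by finitely many `δ`-balls centred in a finite set `s`. Norming functionals of the differences
of points of `s` give a linear map `F : Y → ℝ^(s × s)` of norm `≤ 1` that is isometric on `s`,
so `φ` restricted to `s` factors through a 1-Lipschitz function on `F '' s`. Extend it to the
finite-dimensional space (McShane), truncate it at the bound of `φ`, and mollify it; composed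
with `F` this is smooth, 1-Lipschitz and `3δ`-close to `φ` on the balls.
-/

open MeasureTheory Metric Set Filter Topology
open scoped Convolution ContDiff NNReal ENNReal

theorem Real.sSup_eq_of_forall_le_add {s t : Set ℝ} (hst : s ⊆ t)
    (h : ∀ x ∈ t, ∀ ε > 0, ∃ y ∈ s, x ≤ y + ε) : sSup s = sSup t := by
  have hub : upperBounds s = upperBounds t := by
    refine (upperBounds_mono_set hst).antisymm' fun b hb x hx ↦ le_of_forall_pos_le_add
      fun ε hε ↦ ?_
    obtain ⟨y, hy, hxy⟩ := h x hx ε hε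
    linarith [hb hy]
  rcases s.eq_empty_or_nonempty with rfl | hs
  · have : t = ∅ := eq_empty_of_forall_notMem fun x hx ↦ by simpa using h x hx 1 one_pos
    rw [this]
  by_cases hbdd : BddAbove s
  · exact (isLUB_csSup hs hbdd).unique <|
      (isLUB_congr hub).2 (isLUB_csSup (hs.mono hst) (by rwa [BddAbove, ← hub]))
  · rw [Real.sSup_of_not_bddAbove hbdd, Real.sSup_of_not_bddAbove (by rwa [BddAbove, ← hub])]

theorem ContDiffBump.lipschitzWith_normed_convolution {E : Type*} [NormedAddCommGroup E]
    [NormedSpace ℝ E] [FiniteDimensional ℝ E] [MeasurableSpace E] [BorelSpace E]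
    (μ : Measure E) [μ.IsAddHaarMeasure] (φ : ContDiffBump (0 : E)) {K : ℝ≥0} {g : E → ℝ}
    (hg : LipschitzWith K g) :
    LipschitzWith K (φ.normed μ ⋆[ContinuousLinearMap.lsmul ℝ ℝ, μ] g) := by
  have hint : ∀ x, Integrable (fun t ↦ φ.normed μ t * g (x - t)) μ := fun x ↦
    Continuous.integrable_of_hasCompactSupport
      (φ.continuous_normed.mul (hg.continuous.comp (continuous_sub_left x)))
      φ.hasCompactSupport_normed.mul_right
  refine LipschitzWith.of_dist_le_mul fun x y ↦ ?_
  rw [dist_eq_norm]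
  simp only [convolution_def, ContinuousLinearMap.lsmul_apply, smul_eq_mul,
    ← integral_sub (hint x) (hint y)]
  calc ‖∫ t, φ.normed μ t * g (x - t) - φ.normed μ t * g (y - t) ∂μ‖
      ≤ ∫ t, φ.normed μ t * (K * dist x y) ∂μ := by
        refine norm_integral_le_of_norm_le ((φ.integrable_normed (μ := μ)).mul_const _)
          (ae_of_all _ fun t ↦ ?_)
        rw [← mul_sub, norm_mul, Real.norm_of_nonneg (φ.nonneg_normed t)]
        gcongr
        · exact φ.nonneg_normed t
        · simpa [dist_sub_right, Real.dist_eq] using hg.dist_le_mul (x - t) (y - t)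
    _ = K * dist x y := by rw [integral_mul_const, φ.integral_normed, one_mul]

theorem LipschitzWith.exists_contDiff_lipschitzWith_dist_le {E : Type*} [NormedAddCommGroup E]
    [NormedSpace ℝ E] [FiniteDimensional ℝ E] {K : ℝ≥0} {g : E → ℝ} (hg : LipschitzWith K g)
    {δ : ℝ} (hδ : 0 < δ) :
    ∃ h : E → ℝ, ContDiff ℝ ∞ h ∧ LipschitzWith K h ∧ ∀ t, dist (h t) (g t) ≤ K * δ := by
  borelize E
  let φ : ContDiffBump (0 : E) := ⟨δ / 2, δ, half_pos hδ, half_lt_self hδ⟩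
  refine ⟨_, φ.hasCompactSupport_normed.contDiff_convolution_left _ φ.contDiff_normed
      hg.continuous.locallyIntegrable (μ := .addHaar),
    φ.lipschitzWith_normed_convolution .addHaar hg,
    fun t ↦ φ.dist_normed_convolution_le hg.continuous.aestronglyMeasurable fun x hx ↦ ?_⟩
  exact (hg.dist_le_mul x t).trans (by gcongr; exact (mem_ball.1 hx).le)

theorem Finset.exists_clm_pi_norm_le_one_dist_le {Y : Type*} [NormedAddCommGroup Y]
    [NormedSpace ℝ Y] (s : Finset Y) :
    ∃ F : Y →L[ℝ] (s × s → ℝ), ‖F‖ ≤ 1 ∧ ∀ a ∈ s, ∀ b ∈ s, dist a b ≤ dist (F a) (F b) := by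
  choose f hf_norm hf_apply using fun p : s × s ↦ exists_dual_vector'' ℝ ((p.1 : Y) - p.2)
  let F := ContinuousLinearMap.pi f
  refine ⟨F, ContinuousLinearMap.norm_pi_le_of_le hf_norm zero_le_one, fun a ha b hb ↦ ?_⟩
  calc dist a b = f (⟨a, ha⟩, ⟨b, hb⟩) (a - b) := by simp [hf_apply, dist_eq_norm]
    _ = (F a - F b) (⟨a, ha⟩, ⟨b, hb⟩) := by simp [F]
    _ ≤ ‖F a - F b‖ := (le_abs_self _).trans (norm_le_pi_norm (F a - F b) _)
    _ = dist (F a) (F b) := (dist_eq_norm _ _).symm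

theorem LipschitzOnWith.exists_lipschitzWith_abs_le_comp_eqOn {Y E : Type*} [MetricSpace Y]
    [Nonempty Y] [PseudoMetricSpace E] {K : ℝ≥0} {φ : Y → ℝ} {F : Y → E} {s : Set Y}
    (hφ : LipschitzOnWith K φ s) (hF : ∀ a ∈ s, ∀ b ∈ s, dist a b ≤ dist (F a) (F b))
    {M : ℝ} (hM : ∀ y, |φ y| ≤ M) :
    ∃ G : E → ℝ, LipschitzWith K G ∧ (∀ t, |G t| ≤ M) ∧ EqOn (G ∘ F) φ s := by
  have hinj : InjOn F s := fun a ha b hb hab ↦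
    dist_le_zero.1 (by simpa [hab] using hF a ha b hb)
  have hinv := hinj.leftInvOn_invFunOn
  have hlip : LipschitzOnWith K (φ ∘ Function.invFunOn F s) (F '' s) := by
    refine LipschitzOnWith.of_dist_le_mul ?_
    rintro _ ⟨a, ha, rfl⟩ _ ⟨b, hb, rfl⟩
    simp only [Function.comp_apply, hinv ha, hinv hb]
    exact (hφ.dist_le_mul a ha b hb).trans (by gcongr; exact hF a ha b hb)
  obtain ⟨G, hG, hGeq⟩ := hlip.extend_real
  have hM0 : 0 ≤ M := (abs_nonneg _).trans (hM (Classical.arbitrary Y))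
  refine ⟨fun t ↦ max (min (G t) M) (-M), (hG.min_const M).max_const (-M),
    fun t ↦ abs_le.2 ⟨le_max_right _ _, max_le (min_le_right _ _) (by linarith)⟩,
    fun x hx ↦ ?_⟩
  have hGx : G (F x) = φ x := by
    rw [← hGeq (mem_image_of_mem F hx), Function.comp_apply, hinv hx]
  simp only [Function.comp_apply, hGx, min_eq_left (abs_le.1 (hM x)).2,
    max_eq_left (abs_le.1 (hM x)).1]

theorem LipschitzWith.exists_contDiff_abs_sub_le_on_balls {Y : Type*} [NormedAddCommGroup Y]
    [NormedSpace ℝ Y] {K : ℝ≥0} {φ : Y → ℝ} (hφ : LipschitzWith K φ) {M : ℝ}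
    (hM : ∀ y, |φ y| ≤ M) (s : Finset Y) {δ : ℝ} (hδ : 0 < δ) :
    ∃ ψ : Y → ℝ, ContDiff ℝ ∞ ψ ∧ LipschitzWith K ψ ∧ (∀ y, |ψ y| ≤ M + K * δ) ∧
      ∀ x ∈ s, ∀ y ∈ ball x δ, |ψ y - φ y| ≤ 3 * K * δ := by
  obtain ⟨F, hF_norm, hF⟩ := s.exists_clm_pi_norm_le_one_dist_le
  have hF_lip : LipschitzWith 1 F := F.lipschitz.weaken (by exact_mod_cast hF_norm)
  obtain ⟨G, hG, hG_bound, hGF⟩ :=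
    (hφ.lipschitzOnWith (s := s)).exists_lipschitzWith_abs_le_comp_eqOn hF hM
  obtain ⟨H, hH, hH_lip, hHG⟩ := hG.exists_contDiff_lipschitzWith_dist_le hδ
  refine ⟨H ∘ F, hH.comp F.contDiff, by simpa using hH_lip.comp hF_lip, fun y ↦ ?_,
    fun x hx y hy ↦ ?_⟩
  · have := hHG (F y)
    rw [Real.dist_eq] at this
    show |H (F y)| ≤ _
    linarith [abs_sub_abs_le_abs_sub (H (F y)) (G (F y)), hG_bound (F y)]
  · have hyx : dist y x ≤ δ := (mem_ball.1 hy).le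
    have h₁ : |H (F y) - G (F y)| ≤ K * δ := hHG (F y)
    have h₂ : |G (F y) - φ x| ≤ K * δ := by
      rw [← hGF hx]
      exact (hG.dist_le_mul _ _).trans <| by
        gcongr; exact (hF_lip.dist_le_mul y x).trans (by simpa using hyx)
    have h₃ : |φ x - φ y| ≤ K * δ := by
      rw [abs_sub_comm]; exact (hφ.dist_le_mul y x).trans (by gcongr)
    show |H (F y) - φ y| ≤ _
    linarith [abs_sub_le (H (F y)) (G (F y)) (φ y), abs_sub_le (G (F y)) (φ x) (φ y)]

section Measure

variable {Y : Type*} [MeasurableSpace Y]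

theorem integral_abs_le_of_abs_le_on {κ : Measure Y} [IsFiniteMeasure κ] {f : Y → ℝ}
    (hf : Integrable f κ) {s : Set Y} (hs : MeasurableSet s) {a b : ℝ}
    (ha : ∀ y ∈ s, |f y| ≤ a) (hb : ∀ y, |f y| ≤ b) : ∫ y, |f y| ∂κ ≤ a * κ.real s + b * κ.real sᶜ := by
  rw [← integral_add_compl hs hf.abs]
  have hK := norm_setIntegral_le_of_norm_le_const (f := fun y ↦ |f y|) (measure_lt_top κ s)
    fun y hy ↦ by simpa using ha y hy
  have hKc := norm_setIntegral_le_of_norm_le_const (f := fun y ↦ |f y|) (measure_lt_top κ sᶜ)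
    fun y _ ↦ by simpa using hb y
  exact add_le_add ((le_abs_self _).trans hK) ((le_abs_self _).trans hKc)

theorem integral_sub_integral_sub_le_integral_abs_sub {μ ν : Measure Y} {f g : Y → ℝ}
    (hf : Integrable f (μ + ν)) (hg : Integrable g (μ + ν)) :
    (∫ y, f y ∂μ - ∫ y, f y ∂ν) - (∫ y, g y ∂μ - ∫ y, g y ∂ν) ≤ ∫ y, |g y - f y| ∂(μ + ν) := by
  rw [integral_add_measure (f := fun y ↦ |g y - f y|) (hg.sub hf).abs.left_of_add_measure
    (hg.sub hf).abs.right_of_add_measure]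
  calc (∫ y, f y ∂μ - ∫ y, f y ∂ν) - (∫ y, g y ∂μ - ∫ y, g y ∂ν)
      = ∫ y, f y - g y ∂μ - ∫ y, f y - g y ∂ν := by
        rw [integral_sub hf.left_of_add_measure hg.left_of_add_measure,
          integral_sub hf.right_of_add_measure hg.right_of_add_measure]
        ring
    _ ≤ ∫ y, |f y - g y| ∂μ + ∫ y, |f y - g y| ∂ν :=
        (sub_eq_add_neg _ _).trans_le <| add_le_add
          ((le_abs_self _).trans abs_integral_le_integral_abs)
          ((neg_le_abs _).trans abs_integral_le_integral_abs)
    _ = ∫ y, |g y - f y| ∂μ + ∫ y, |g y - f y| ∂ν := by simp only [abs_sub_comm]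

theorem exists_finset_measure_compl_iUnion_ball_lt [PseudoMetricSpace Y]
    [TopologicalSpace.SeparableSpace Y] [Nonempty Y] [OpensMeasurableSpace Y]
    (κ : Measure Y) [IsFiniteMeasure κ] {δ : ℝ} (hδ : 0 < δ) {η : ℝ≥0∞} (hη : 0 < η) :
    ∃ s : Finset Y, κ (⋃ x ∈ s, ball x δ)ᶜ < η := by
  classical
  obtain ⟨u, hu⟩ := TopologicalSpace.exists_dense_seq Y
  set A : ℕ → Set Y := fun n ↦ ⋃ i ∈ Finset.range n, ball (u i) δ
  have hA : ⋃ n, A n = univ := by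
    refine eq_univ_of_forall fun y ↦ ?_
    obtain ⟨i, hi⟩ := hu.exists_dist_lt y hδ
    exact mem_iUnion.2 ⟨i + 1, mem_biUnion (Finset.self_mem_range_succ i) hi⟩
  have hlim : Tendsto (fun n ↦ κ (A n)ᶜ) atTop (𝓝 0) := by
    have := tendsto_measure_iInter_atTop (μ := κ) (s := fun n ↦ (A n)ᶜ)
      (fun n ↦ (isOpen_biUnion fun i _ ↦ isOpen_ball).measurableSet.compl.nullMeasurableSet)
      (fun m n hmn ↦ compl_subset_compl.2 <| biUnion_subset_biUnion_left <| by
        simpa using hmn) ⟨0, measure_ne_top _ _⟩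
    rwa [← compl_iUnion, hA, compl_univ, measure_empty] at this
  obtain ⟨n, hn⟩ := (hlim.eventually_lt_const hη).exists
  exact ⟨(Finset.range n).image u, by simpa [A] using hn⟩

theorem LipschitzWith.exists_contDiff_integral_abs_sub_le [NormedAddCommGroup Y]
    [NormedSpace ℝ Y] [TopologicalSpace.SeparableSpace Y] [OpensMeasurableSpace Y]
    (κ : Measure Y) [IsFiniteMeasure κ] {K : ℝ≥0} {φ : Y → ℝ} (hφ : LipschitzWith K φ) {M : ℝ}
    (hM : ∀ y, |φ y| ≤ M) {ε : ℝ} (hε : 0 < ε) :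
    ∃ ψ : Y → ℝ, ContDiff ℝ ∞ ψ ∧ LipschitzWith K ψ ∧ (∃ C, ∀ y, |ψ y| ≤ C) ∧
      ∫ y, |ψ y - φ y| ∂κ ≤ ε := by
  have hM0 : 0 ≤ M := (abs_nonneg _).trans (hM 0)
  set δ := ε / (3 * K * κ.real univ + 1)
  have hδ : 0 < δ := by positivity
  set C := 2 * M + K * δ
  obtain ⟨s, hs⟩ := exists_finset_measure_compl_iUnion_ball_lt κ hδ
    (η := ENNReal.ofReal (δ / (C + 1))) (by simp only [ENNReal.ofReal_pos]; positivity)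
  obtain ⟨ψ, hψ, hψ_lip, hψ_bound, hψφ⟩ := hφ.exists_contDiff_abs_sub_le_on_balls hM s hδ
  refine ⟨ψ, hψ, hψ_lip, ⟨_, hψ_bound⟩, ?_⟩
  set U := ⋃ x ∈ s, ball x δ
  have hψφ_bound : ∀ y, |ψ y - φ y| ≤ C := fun y ↦
    (abs_sub _ _).trans (by linarith [hψ_bound y, hM y])
  have hint : Integrable (fun y ↦ ψ y - φ y) κ :=
    .of_bound (hψ.continuous.sub hφ.continuous).aestronglyMeasurable C (ae_of_all _ hψφ_bound)
  have hU : MeasurableSet U := (isOpen_biUnion fun x _ ↦ isOpen_ball).measurableSet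
  have hψφ_U : ∀ y ∈ U, |ψ y - φ y| ≤ 3 * K * δ := by
    intro y hy
    obtain ⟨x, hx, hyx⟩ := mem_iUnion₂.1 hy
    exact hψφ x hx y hyx
  have htail : C * κ.real Uᶜ ≤ δ := by
    have : κ.real Uᶜ ≤ δ / (C + 1) := ENNReal.toReal_le_of_le_ofReal (by positivity) hs.le
    calc C * κ.real Uᶜ ≤ C * (δ / (C + 1)) := by gcongr
      _ ≤ δ := by
        rw [mul_div_assoc', div_le_iff₀ (by positivity)]
        nlinarith
  calc ∫ y, |ψ y - φ y| ∂κ ≤ 3 * K * δ * κ.real U + C * κ.real Uᶜ :=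
        integral_abs_le_of_abs_le_on hint hU hψφ_U hψφ_bound
    _ ≤ 3 * K * δ * κ.real univ + δ := by
        gcongr 3 * K * δ * ?_ + ?_
        exact measureReal_mono (subset_univ U)
    _ = ε := by
        rw [show 3 * K * δ * κ.real univ + δ = δ * (3 * K * κ.real univ + 1) by ring]
        exact div_mul_cancel₀ _ (by positivity)

end Measure

theorem stmt6_general {Y : Type*} [NormedAddCommGroup Y] [NormedSpace ℝ Y]
    [TopologicalSpace.SeparableSpace Y]
    [MeasurableSpace Y] [BorelSpace Y]
    (μ ν : Measure Y) [IsProbabilityMeasure μ] [IsProbabilityMeasure ν] :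
    sSup {r : ℝ | ∃ φ : Y → ℝ, (∃ M : ℝ, ∀ y, |φ y| ≤ M) ∧ ContDiff ℝ 1 φ ∧
        LipschitzWith 1 φ ∧ r = ∫ y, φ y ∂μ - ∫ y, φ y ∂ν} =
      sSup {r : ℝ | ∃ φ : Y → ℝ, (∃ M : ℝ, ∀ y, |φ y| ≤ M) ∧
        LipschitzWith 1 φ ∧ r = ∫ y, φ y ∂μ - ∫ y, φ y ∂ν} := by
  refine Real.sSup_eq_of_forall_le_add (fun r ⟨φ, hφ_bdd, _, hφ, hr⟩ ↦ ⟨φ, hφ_bdd, hφ, hr⟩) ?_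
  rintro _ ⟨φ, ⟨M, hM⟩, hφ, rfl⟩ ε hε
  obtain ⟨ψ, hψ, hψ_lip, ⟨C, hC⟩, hψφ⟩ := hφ.exists_contDiff_integral_abs_sub_le (μ + ν) hM hε
  refine ⟨_, ⟨ψ, ⟨C, hC⟩, hψ.of_le (by simp), hψ_lip, rfl⟩, ?_⟩
  have := integral_sub_integral_sub_le_integral_abs_sub (μ := μ) (ν := ν)
    (.of_bound hφ.continuous.aestronglyMeasurable M (ae_of_all _ hM))
    (.of_bound hψ.continuous.aestronglyMeasurable C (ae_of_all _ hC))
  linarith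

/-- On a separable Banach space, for probability measures with finite first moment,
the `C¹`-smooth dual distance coincides with the 1-Wasserstein distance in its
Kantorovich dual form over bounded Lipschitz test functions. -/
theorem stmt6 {Y : Type*} [NormedAddCommGroup Y] [NormedSpace ℝ Y]
    [CompleteSpace Y] [TopologicalSpace.SeparableSpace Y]
    [MeasurableSpace Y] [BorelSpace Y]
    (μ ν : Measure Y) [IsProbabilityMeasure μ] [IsProbabilityMeasure ν]
    (hμ : Integrable (fun y => ‖y‖) μ) (hν : Integrable (fun y => ‖y‖) ν) :
    sSup {r : ℝ | ∃ φ : Y → ℝ, (∃ M : ℝ, ∀ y, |φ y| ≤ M) ∧ ContDiff ℝ 1 φ ∧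
        LipschitzWith 1 φ ∧ r = ∫ y, φ y ∂μ - ∫ y, φ y ∂ν} =
      sSup {r : ℝ | ∃ φ : Y → ℝ, (∃ M : ℝ, ∀ y, |φ y| ≤ M) ∧
        LipschitzWith 1 φ ∧ r = ∫ y, φ y ∂μ - ∫ y, φ y ∂ν} :=
  stmt6_general μ ν
end

section
/- Let Y be a Banach space, C ⊂ Y closed convex, f : C × C → Y L-Lipschitz satisfying: for every R > 0 there is θ > 0 such that c, c' ∈ C with ‖c‖, ‖c'‖ ≤ R implies c + θ f(c, c') ∈ C. Let Λ : [0,T] → P(C) be continuous with Λ_t supported in a fixed ball B_R̄(0) for all t. Then for every R > 0 there exists θ > 0 such that, for all y ∈ C with ‖y‖ ≤ R and all t ∈ [0,T], y + θ b_Λ(t, y) ∈ C, where b_Λ(t,y) = ∫ f(y,y') dΛ_t(y'). -/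
open MeasureTheory

/-! Closed convex sets contain the barycentres of probability measures carried by them. For
`y ∈ C` with `‖y‖ ≤ R`, a single compatibility constant `θ` for the radius `max R R̄` works for
every `y'` in the support `C ∩ B_R̄(0)` of `Λ_t`, so `y + θ f(y, y') ∈ C` for `Λ_t`-a.e. `y'`,
and averaging in `y'` gives `y + θ b_Λ(t, y) ∈ C`. -/

theorem Convex.add_integral_mem {α E : Type*} [MeasurableSpace α] [NormedAddCommGroup E]
    [NormedSpace ℝ E] [CompleteSpace E] {μ : Measure α} [IsProbabilityMeasure μ] {C : Set E}
    (hconv : Convex ℝ C) (hC : IsClosed C) {y : E} (hy : y ∈ C) {g : α → E}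
    (hg : ∀ᵐ x ∂μ, y + g x ∈ C) : y + ∫ x, g x ∂μ ∈ C := by
  by_cases hint : Integrable g μ
  · have hbar : ∫ x, (y + g x) ∂μ = y + ∫ x, g x ∂μ := by
      rw [integral_add (integrable_const y) hint, integral_const, probReal_univ, one_smul]
    exact hbar ▸ hconv.integral_mem hC hg ((integrable_const y).add hint)
  · rwa [integral_undef hint, add_zero]

theorem ae_mem_of_measure_eq_one {α : Type*} [MeasurableSpace α] {μ : Measure α}
    [IsProbabilityMeasure μ] {s : Set α} (hs : MeasurableSet s) (hμs : μ s = 1) :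
    ∀ᵐ x ∂μ, x ∈ s :=
  (ae_mem_iff_measure_eq hs.nullMeasurableSet).2 (hμs.trans measure_univ.symm)

theorem stmt12_general {Y : Type*} [NormedAddCommGroup Y] [NormedSpace ℝ Y]
    [CompleteSpace Y] [MeasurableSpace Y] [BorelSpace Y]
    (C : Set Y) (hC : IsClosed C) (hconv : Convex ℝ C)
    (T : ℝ)
    (f : Y → Y → Y)
    (hcompat : ∀ R > (0 : ℝ), ∃ θ > (0 : ℝ), ∀ c ∈ C, ∀ c' ∈ C,
      ‖c‖ ≤ R → ‖c'‖ ≤ R → c + θ • f c c' ∈ C)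
    (Λ : ℝ → Measure Y)
    (hΛp : ∀ t ∈ Set.Icc 0 T, IsProbabilityMeasure (Λ t))
    (Rbar : ℝ)
    (hsupp : ∀ t ∈ Set.Icc 0 T, Λ t (C ∩ Metric.closedBall 0 Rbar) = 1) :
    ∀ R > (0 : ℝ), ∃ θ > (0 : ℝ), ∀ t ∈ Set.Icc 0 T, ∀ y ∈ C, ‖y‖ ≤ R →
      y + θ • (∫ y', f y y' ∂Λ t) ∈ C := by
  intro R hR
  obtain ⟨θ, hθ, hθC⟩ := hcompat (max R Rbar) (hR.trans_le (le_max_left _ _))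
  refine ⟨θ, hθ, fun t ht y hy hyR => ?_⟩
  have := hΛp t ht
  have hsuppC : ∀ᵐ y' ∂Λ t, y' ∈ C ∩ Metric.closedBall 0 Rbar :=
    ae_mem_of_measure_eq_one (hC.measurableSet.inter measurableSet_closedBall) (hsupp t ht)
  have hstep : ∀ᵐ y' ∂Λ t, y + θ • f y y' ∈ C := by
    filter_upwards [hsuppC] with y' ⟨hy'C, hy'R⟩
    refine hθC y hy y' hy'C (hyR.trans (le_max_left _ _)) ?_
    exact (mem_closedBall_zero_iff.1 hy'R).trans (le_max_right _ _)
  rw [← integral_smul]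
  exact hconv.add_integral_mem hC hy hstep

/-- Invariance of the closed convex set `C` under the averaged field
`b_Λ(t,y) = ∫ f(y,y') dΛ_t(y')`: if `f` satisfies the subtangential compatibility
condition on `C` and the measures `Λ_t` are probability measures supported in
`C ∩ B_R̄(0)`, then for every `R > 0` there is `θ > 0` with
`y + θ b_Λ(t,y) ∈ C` whenever `y ∈ C`, `‖y‖ ≤ R`, `t ∈ [0,T]`. -/
theorem stmt12 {Y : Type*} [NormedAddCommGroup Y] [NormedSpace ℝ Y]
    [CompleteSpace Y] [MeasurableSpace Y] [BorelSpace Y]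
    (C : Set Y) (hC : IsClosed C) (hconv : Convex ℝ C)
    (T L : ℝ) (hL : 0 ≤ L) (hT : 0 ≤ T)
    (f : Y → Y → Y)
    (hf : ∀ y₁ ∈ C, ∀ y₂ ∈ C, ∀ y₁' ∈ C, ∀ y₂' ∈ C,
      ‖f y₁ y₂ - f y₁' y₂'‖ ≤ L * (‖y₁ - y₁'‖ + ‖y₂ - y₂'‖))
    (hcompat : ∀ R > (0 : ℝ), ∃ θ > (0 : ℝ), ∀ c ∈ C, ∀ c' ∈ C,
      ‖c‖ ≤ R → ‖c'‖ ≤ R → c + θ • f c c' ∈ C)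
    (Λ : ℝ → Measure Y)
    (hΛp : ∀ t ∈ Set.Icc 0 T, IsProbabilityMeasure (Λ t))
    (Rbar : ℝ)
    (hsupp : ∀ t ∈ Set.Icc 0 T, Λ t (C ∩ Metric.closedBall 0 Rbar) = 1) :
    ∀ R > (0 : ℝ), ∃ θ > (0 : ℝ), ∀ t ∈ Set.Icc 0 T, ∀ y ∈ C, ‖y‖ ≤ R →
      y + θ • (∫ y', f y y' ∂Λ t) ∈ C :=
  stmt12_general C hC hconv T f hcompat Λ hΛp Rbar hsupp
end

section
/- (Brezis well-posedness) Let E be a Banach space, C ⊂ E closed convex, and A(t,·) : C → E, t ∈ [0,T], satisfy: (1) ‖A(t,c₁)−A(t,c₂)‖ ≤ L‖c₁−c₂‖ for all c₁,c₂ ∈ C, t; (2) t ↦ A(t,c) continuous for each c ∈ C; (3) for every R > 0 there is θ > 0 such that c ∈ C, ‖c‖ ≤ R implies c + θA(t,c) ∈ C. Then for every c̄ ∈ C there is a unique C¹ curve c : [0,T] → C with c_0 = c̄ and ċ_t = A(t, c_t); moreover two solutions with initial data c̄¹, c̄² satisfy ‖c¹_t − c²_t‖ ≤ e^{Lt}‖c̄¹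 − c̄²‖. -/
/-!
Rewrite the equation as `ċ = -κ c + κ (c + κ⁻¹ A(t, c))` and solve it by variation of constants:
a solution is a fixed point of
`Φ(c)_t = e^{-κt} (c̄ + ∫₀ᵗ κ e^{κs} (c_s + κ⁻¹ A(s, c_s)) ds)`.
Since `e^{-κt} + ∫₀ᵗ κ e^{κ(s-t)} ds = 1`, the point `Φ(c)_t` is a weighted average of `c̄` and of
the points `c_s + κ⁻¹ A(s, c_s)`, which lie in `C` by subtangentiality with `θ = κ⁻¹` as long as
`‖c_s‖ ≤ R`; as `C` is closed and convex, `Φ(c)_t ∈ C` (Hahn–Banach). The radius `R`, hence `θ`,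
is fixed in advance by the a priori bound `‖c_t - c̄‖ ≤ M t e^{Lt}`, where `M` bounds `‖A(t, c̄)‖`:
`Φ` preserves it because `g(t) = M t e^{Lt}` satisfies `g' ≥ M + L g`. On the closed set of such
curves `‖Φⁿ c - Φⁿ c'‖ ≤ ((κ + L) T)ⁿ / n! ‖c - c'‖`, so an iterate of `Φ` is a contraction and `Φ`
has a fixed point. Uniqueness and the stability estimate are Grönwall's inequality.
-/

/-- A `C¹` solution on `[0,T]` with values in `C` of the ODE `ċ_t = A(t,c_t)`. -/
def IsBrezisSol {E : Type*} [NormedAddCommGroup E] [NormedSpace ℝ E]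
    (C : Set E) (T : ℝ) (A : ℝ → E → E) (c : ℝ → E) : Prop :=
  (∀ t ∈ Set.Icc 0 T, c t ∈ C) ∧
  ContinuousOn c (Set.Icc 0 T) ∧
  (∀ t ∈ Set.Icc 0 T, HasDerivWithinAt c (A t (c t)) (Set.Icc 0 T) t)

open Set Real Function Filter Topology intervalIntegral
open scoped Nat

section

variable {E : Type*} [NormedAddCommGroup E]

theorem lipschitzOnWith_toNNReal_of_norm_sub_le {F : Type*} [SeminormedAddCommGroup F] {f : E → F}
    {s : Set E} {L : ℝ} (h : ∀ x ∈ s, ∀ y ∈ s, ‖f x - f y‖ ≤ L * ‖x - y‖) :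
    LipschitzOnWith L.toNNReal f s :=
  LipschitzOnWith.of_dist_le' fun x hx y hy => by simpa only [dist_eq_norm] using h x hx y hy

variable [NormedSpace ℝ E]

theorem integral_mul_exp_mul (κ t : ℝ) : ∫ s in 0..t, κ * exp (κ * s) = exp (κ * t) - 1 := by
  rw [integral_eq_sub_of_hasDerivAt (f := fun s => exp (κ * s))
    (fun s _ => by simpa [mul_comm] using ((hasDerivAt_id s).const_mul κ).exp)
    ((by fun_prop : Continuous fun s => κ * exp (κ * s)).intervalIntegrable _ _)]
  simp

theorem norm_exp_neg_smul_integral_le {κ t : ℝ} (ht : 0 ≤ t) {v : ℝ → E} {b : ℝ → ℝ}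
    (hb : ContinuousOn b (Icc 0 t)) (hvb : ∀ s ∈ Icc 0 t, ‖v s‖ ≤ b s) :
    ‖exp (-(κ * t)) • ∫ s in 0..t, exp (κ * s) • v s‖ ≤
      exp (-(κ * t)) * ∫ s in 0..t, exp (κ * s) * b s := by
  rw [norm_smul, norm_of_nonneg (exp_pos _).le]
  gcongr
  refine norm_integral_le_of_norm_le ht (Filter.Eventually.of_forall fun s hs => ?_)
    (((by fun_prop : Continuous fun s => exp (κ * s)).continuousOn.mul hb).intervalIntegrable_of_Icc
      ht)
  rw [norm_smul, norm_of_nonneg (exp_pos _).le]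
  exact mul_le_mul_of_nonneg_left (hvb s (Ioc_subset_Icc_self hs)) (exp_pos _).le

theorem Convex.exp_neg_smul_add_integral_mem [CompleteSpace E] {C : Set E}
    (hconv : Convex ℝ C) (hC : IsClosed C) {κ t : ℝ} (hκ : 0 ≤ κ) (ht : 0 ≤ t) {x : E}
    (hx : x ∈ C) {y : ℝ → E} (hy : ContinuousOn y (Icc 0 t)) (hyC : ∀ s ∈ Icc 0 t, y s ∈ C) :
    exp (-(κ * t)) • (x + ∫ s in 0..t, (κ * exp (κ * s)) • y s) ∈ C := by
  by_contra hnot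
  obtain ⟨ℓ, u, hℓC, hℓ⟩ := geometric_hahn_banach_closed_point hconv hC hnot
  have hcont : ContinuousOn (fun s => (κ * exp (κ * s)) • y s) (Icc 0 t) :=
    (by fun_prop : Continuous fun s => κ * exp (κ * s)).continuousOn.smul hy
  have hle : ∫ s in 0..t, ℓ ((κ * exp (κ * s)) • y s) ≤ (exp (κ * t) - 1) * u := by
    rw [← integral_mul_exp_mul, ← intervalIntegral.integral_mul_const]
    refine integral_mono_on ht ((ℓ.continuous.comp_continuousOn hcont).intervalIntegrable_of_Icc ht)
      ((by fun_prop : Continuous fun s => κ * exp (κ * s) * u).intervalIntegrable _ _)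
      fun s hs => ?_
    rw [map_smul, smul_eq_mul]
    exact mul_le_mul_of_nonneg_left (hℓC _ (hyC s hs)).le (by positivity)
  rw [map_smul, map_add, ← ℓ.intervalIntegral_comp_comm (hcont.intervalIntegrable_of_Icc ht),
    smul_eq_mul] at hℓ
  have hsum : ℓ x + ∫ s in 0..t, ℓ ((κ * exp (κ * s)) • y s) < exp (κ * t) * u := by
    linarith [hℓC x hx]
  have := mul_lt_mul_of_pos_left hsum (exp_pos (-(κ * t)))
  rw [← mul_assoc, ← exp_add, neg_add_cancel, exp_zero, one_mul] at this
  linarith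

theorem le_pow_div_factorial_mul_of_le_integral {K D T : ℝ} (hK : 0 ≤ K) {u : ℕ → ℝ → ℝ}
    (hu : ∀ n, ContinuousOn (u n) (Icc 0 T)) (h0 : ∀ t ∈ Icc 0 T, u 0 t ≤ D)
    (hsucc : ∀ n, ∀ t ∈ Icc 0 T, u (n + 1) t ≤ K * ∫ s in 0..t, u n s) :
    ∀ n, ∀ t ∈ Icc 0 T, u n t ≤ (K * t) ^ n / n ! * D := by
  intro n
  induction n with
  | zero => simpa using h0
  | succ n ih =>
    intro t ht
    have hsub : Icc 0 t ⊆ Icc 0 T := Icc_subset_Icc_right ht.2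
    have hint : ∫ s in 0..t, (K * s) ^ n / n ! * D = K ^ n / n ! * D * (t ^ (n + 1) / (n + 1)) := by
      simp_rw [mul_pow, mul_div_right_comm _ (_ ^ n), mul_right_comm _ (_ ^ n)]
      rw [integral_const_mul, integral_pow]
      ring
    calc u (n + 1) t ≤ K * ∫ s in 0..t, u n s := hsucc n t ht
      _ ≤ K * ∫ s in 0..t, (K * s) ^ n / n ! * D := by
        gcongr
        exact integral_mono_on ht.1 ((hu n).mono hsub |>.intervalIntegrable_of_Icc ht.1)
          ((by fun_prop : Continuous fun s : ℝ => (K * s) ^ n / n ! * D).intervalIntegrable _ _)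
          fun s hs => ih s (hsub hs)
      _ = (K * t) ^ (n + 1) / (n + 1)! * D := by
        rw [hint, Nat.factorial_succ]
        push_cast
        field_simp
        ring

theorem exists_isFixedPt_of_dist_iterate_le {X : Type*} [MetricSpace X] [CompleteSpace X]
    [Nonempty X] {f : X → X} {a : ℕ → ℝ} (ha : Tendsto a atTop (𝓝 0))
    (hf : ∀ n x y, dist (f^[n] x) (f^[n] y) ≤ a n * dist x y) : ∃ x, IsFixedPt f x := by
  obtain ⟨n, hn⟩ := (ha.eventually (gt_mem_nhds one_pos)).exists
  have hcontr : ContractingWith (a n).toNNReal f^[n] :=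
    ⟨by simpa using hn, LipschitzWith.of_dist_le_mul fun x y =>
      (hf n x y).trans (by gcongr; exact le_coe_toNNReal _)⟩
  exact ⟨_, hcontr.isFixedPt_fixedPoint_iterate⟩

theorem hasDerivAt_mul_mul_exp (M L t : ℝ) :
    HasDerivAt (fun t => M * t * exp (L * t)) (M * exp (L * t) + L * (M * t * exp (L * t))) t := by
  have hexp : HasDerivAt (fun t => exp (L * t)) (exp (L * t) * L) t := by
    simpa using ((hasDerivAt_id t).const_mul L).exp
  refine (((hasDerivAt_id t).const_mul M).mul hexp).congr_deriv ?_
  simp only [id, mul_one]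
  ring

theorem IsBrezisSol.norm_sub_le {C : Set E} {T L : ℝ} {A : ℝ → E → E} {c₁ c₂ : ℝ → E}
    (hL : 0 ≤ L) (hlip : ∀ t ∈ Icc 0 T, ∀ x ∈ C, ∀ y ∈ C, ‖A t x - A t y‖ ≤ L * ‖x - y‖)
    (h₁ : IsBrezisSol C T A c₁) (h₂ : IsBrezisSol C T A c₂) {t : ℝ} (ht : t ∈ Icc 0 T) :
    ‖c₁ t - c₂ t‖ ≤ exp (L * t) * ‖c₁ 0 - c₂ 0‖ := by
  have hright : ∀ {c : ℝ → E}, IsBrezisSol C T A c →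
      ∀ s ∈ Ico 0 T, HasDerivWithinAt c (A s (c s)) (Ici s) s := fun hc s hs =>
    (hc.2.2 s (Ico_subset_Icc_self hs)).mono_of_mem_nhdsWithin (Icc_mem_nhdsGE_of_mem hs)
  have := dist_le_of_trajectories_ODE_of_mem (K := L.toNNReal) (s := fun _ => C)
    (fun s hs => lipschitzOnWith_toNNReal_of_norm_sub_le (hlip s (Ico_subset_Icc_self hs)))
    h₁.2.1 (hright h₁) (fun s hs => h₁.1 s (Ico_subset_Icc_self hs))
    h₂.2.1 (hright h₂) (fun s hs => h₂.1 s (Ico_subset_Icc_self hs)) le_rfl t ht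
  simpa [dist_eq_norm, Real.coe_toNNReal L hL, mul_comm] using this

noncomputable def expPicard (κ : ℝ) (A : ℝ → E → E) (x₀ : E) (γ : ℝ → E) (t : ℝ) : E :=
  exp (-(κ * t)) • ODE.picard (fun s x => exp (κ * s) • (κ • x + A s x)) 0 x₀ γ t

section

variable {κ T : ℝ} {C : Set E} {A : ℝ → E → E} {x₀ : E} {γ : ℝ → E}

theorem expPicard_zero : expPicard κ A x₀ γ 0 = x₀ := by
  simp [expPicard]

theorem continuousOn_expPicard_integrand (hA : ContinuousOn (uncurry A) (Icc 0 T ×ˢ C))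
    (hγ : ContinuousOn γ (Icc 0 T)) (hγC : MapsTo γ (Icc 0 T) C) :
    ContinuousOn (fun s => exp (κ * s) • (κ • γ s + A s (γ s))) (Icc 0 T) :=
  ODE.continuousOn_comp (f := fun s x => exp (κ * s) • (κ • x + A s x)) (by fun_prop) hγ hγC

theorem hasDerivWithinAt_expPicard [CompleteSpace E] (hA : ContinuousOn (uncurry A) (Icc 0 T ×ˢ C))
    (hγ : ContinuousOn γ (Icc 0 T)) (hγC : MapsTo γ (Icc 0 T) C) {t : ℝ} (ht : t ∈ Icc 0 T) :
    HasDerivWithinAt (expPicard κ A x₀ γ) (κ • (γ t - expPicard κ A x₀ γ t) + A t (γ t))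
      (Icc 0 T) t := by
  have hpicard := ODE.hasDerivWithinAt_picard_Icc (left_mem_Icc.2 (ht.1.trans ht.2))
    (by fun_prop : ContinuousOn (uncurry fun s x => exp (κ * s) • (κ • x + A s x))
      (Icc 0 T ×ˢ C)) hγ hγC x₀ ht
  have hexp : HasDerivAt (fun t => exp (-(κ * t))) (-κ * exp (-(κ * t))) t := by
    simpa [mul_comm] using ((hasDerivAt_id t).const_mul κ).neg.exp
  refine (hexp.hasDerivWithinAt.smul hpicard).congr_deriv ?_
  have hinv : exp (-(κ * t)) * exp (κ * t) = 1 := by rw [← exp_add, neg_add_cancel, exp_zero]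
  rw [expPicard, smul_smul, hinv, one_smul]
  module

theorem expPicard_sub_expPicard [CompleteSpace E] (hA : ContinuousOn (uncurry A) (Icc 0 T ×ˢ C))
    {γ₁ γ₂ : ℝ → E} (hγ₁ : ContinuousOn γ₁ (Icc 0 T)) (hγ₁C : MapsTo γ₁ (Icc 0 T) C)
    (hγ₂ : ContinuousOn γ₂ (Icc 0 T)) (hγ₂C : MapsTo γ₂ (Icc 0 T) C) {t : ℝ} (ht : t ∈ Icc 0 T) :
    expPicard κ A x₀ γ₁ t - expPicard κ A x₀ γ₂ t = exp (-(κ * t)) •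
      ∫ s in 0..t, exp (κ * s) • (κ • (γ₁ s - γ₂ s) + (A s (γ₁ s) - A s (γ₂ s))) := by
  have hsub : Icc 0 t ⊆ Icc 0 T := Icc_subset_Icc_right ht.2
  rw [expPicard, expPicard, ODE.picard_apply, ODE.picard_apply, ← smul_sub, add_sub_add_left_eq_sub,
    ← integral_sub
      ((continuousOn_expPicard_integrand hA hγ₁ hγ₁C).mono hsub |>.intervalIntegrable_of_Icc ht.1)
      ((continuousOn_expPicard_integrand hA hγ₂ hγ₂C).mono hsub |>.intervalIntegrable_of_Icc ht.1)]
  congr 1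
  refine integral_congr fun s _ => ?_
  module

theorem norm_expPicard_sub_expPicard_le [CompleteSpace E] {L : ℝ} (hκ : 0 ≤ κ)
    (hA : ContinuousOn (uncurry A) (Icc 0 T ×ˢ C))
    (hlip : ∀ t ∈ Icc 0 T, ∀ x ∈ C, ∀ y ∈ C, ‖A t x - A t y‖ ≤ L * ‖x - y‖)
    {γ₁ γ₂ : ℝ → E} (hγ₁ : ContinuousOn γ₁ (Icc 0 T)) (hγ₁C : MapsTo γ₁ (Icc 0 T) C)
    (hγ₂ : ContinuousOn γ₂ (Icc 0 T)) (hγ₂C : MapsTo γ₂ (Icc 0 T) C) {t : ℝ} (ht : t ∈ Icc 0 T) :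
    ‖expPicard κ A x₀ γ₁ t - expPicard κ A x₀ γ₂ t‖ ≤ (κ + L) * ∫ s in 0..t, ‖γ₁ s - γ₂ s‖ := by
  have hsub : Icc 0 t ⊆ Icc 0 T := Icc_subset_Icc_right ht.2
  have hdist : ContinuousOn (fun s => (κ + L) * ‖γ₁ s - γ₂ s‖) (Icc 0 t) :=
    (continuousOn_const.mul (hγ₁.sub hγ₂).norm).mono hsub
  have hpoint : ∀ s ∈ Icc 0 t, ‖κ • (γ₁ s - γ₂ s) + (A s (γ₁ s) - A s (γ₂ s))‖ ≤
      (κ + L) * ‖γ₁ s - γ₂ s‖ := fun s hs => by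
    grw [norm_add_le, norm_smul, norm_of_nonneg hκ,
      hlip s (hsub hs) _ (hγ₁C (hsub hs)) _ (hγ₂C (hsub hs))]
    rw [add_mul]
  rw [expPicard_sub_expPicard hA hγ₁ hγ₁C hγ₂ hγ₂C ht, ← integral_const_mul]
  refine (norm_exp_neg_smul_integral_le ht.1 hdist hpoint).trans ?_
  rw [← integral_const_mul]
  refine integral_mono_on ht.1 ?_ (hdist.intervalIntegrable_of_Icc ht.1) fun s hs => ?_
  · exact (continuousOn_const.mul ((by fun_prop : Continuous fun s => exp (κ * s)).continuousOn.mul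
      hdist)).intervalIntegrable_of_Icc ht.1
  · have hexp : exp (-(κ * t)) * exp (κ * s) ≤ 1 := by
      rw [← exp_add, exp_le_one_iff]; nlinarith [hs.2]
    calc exp (-(κ * t)) * (exp (κ * s) * ((κ + L) * ‖γ₁ s - γ₂ s‖))
        = (exp (-(κ * t)) * exp (κ * s)) * ((κ + L) * ‖γ₁ s - γ₂ s‖) := by ring
      _ ≤ (κ + L) * ‖γ₁ s - γ₂ s‖ :=
        mul_le_of_le_one_left ((norm_nonneg _).trans (hpoint s hs)) hexp

theorem expPicard_sub [CompleteSpace E] (hA : ContinuousOn (uncurry A) (Icc 0 T ×ˢ C))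
    (hγ : ContinuousOn γ (Icc 0 T)) (hγC : MapsTo γ (Icc 0 T) C) {t : ℝ} (ht : t ∈ Icc 0 T) :
    expPicard κ A x₀ γ t - x₀ =
      exp (-(κ * t)) • ∫ s in 0..t, exp (κ * s) • (κ • (γ s - x₀) + A s (γ s)) := by
  have hx₀ : exp (-(κ * t)) • (x₀ + ∫ s in 0..t, (κ * exp (κ * s)) • x₀) = x₀ := by
    rw [intervalIntegral.integral_smul_const, integral_mul_exp_mul,
      show x₀ + (exp (κ * t) - 1) • x₀ = exp (κ * t) • x₀ by module, smul_smul, ← exp_add,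
      neg_add_cancel, exp_zero, one_smul]
  calc expPicard κ A x₀ γ t - x₀
      = exp (-(κ * t)) • (x₀ + ∫ s in 0..t, exp (κ * s) • (κ • γ s + A s (γ s))) -
          exp (-(κ * t)) • (x₀ + ∫ s in 0..t, (κ * exp (κ * s)) • x₀) := by
        rw [hx₀, expPicard, ODE.picard_apply]
    _ = _ := by
      rw [← smul_sub, add_sub_add_left_eq_sub, ← integral_sub
        ((continuousOn_expPicard_integrand hA hγ hγC).mono (Icc_subset_Icc_right ht.2)
          |>.intervalIntegrable_of_Icc ht.1)
        ((by fun_prop : Continuous fun s => (κ * exp (κ * s)) • x₀).intervalIntegrable _ _)]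
      congr 1
      refine integral_congr fun s _ => ?_
      module

theorem norm_expPicard_sub_le [CompleteSpace E] (hκ : 0 ≤ κ)
    (hA : ContinuousOn (uncurry A) (Icc 0 T ×ˢ C)) (hγ : ContinuousOn γ (Icc 0 T))
    (hγC : MapsTo γ (Icc 0 T) C) {g g' : ℝ → ℝ} (hg : ∀ s ∈ Icc 0 T, HasDerivAt g (g' s) s)
    (hg' : ContinuousOn g' (Icc 0 T)) (hg0 : g 0 = 0)
    (hγg : ∀ s ∈ Icc 0 T, ‖γ s - x₀‖ ≤ g s) (hAg : ∀ s ∈ Icc 0 T, ‖A s (γ s)‖ ≤ g' s)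
    {t : ℝ} (ht : t ∈ Icc 0 T) : ‖expPicard κ A x₀ γ t - x₀‖ ≤ g t := by
  have hsub : Icc 0 t ⊆ Icc 0 T := Icc_subset_Icc_right ht.2
  have hb : ContinuousOn (fun s => κ * g s + g' s) (Icc 0 T) :=
    (continuousOn_const.mul fun s hs => (hg s hs).continuousAt.continuousWithinAt).add hg'
  have hpoint : ∀ s ∈ Icc 0 t, ‖κ • (γ s - x₀) + A s (γ s)‖ ≤ κ * g s + g' s := fun s hs => by
    grw [norm_add_le, norm_smul, norm_of_nonneg hκ, hγg s (hsub hs), hAg s (hsub hs)]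
  have hderiv : ∀ s ∈ uIcc 0 t, HasDerivAt (fun s => exp (κ * s) * g s)
      (exp (κ * s) * (κ * g s + g' s)) s := fun s hs => by
    have hexp : HasDerivAt (fun s => exp (κ * s)) (exp (κ * s) * κ) s := by
      simpa using ((hasDerivAt_id s).const_mul κ).exp
    refine (hexp.mul (hg s (hsub (uIcc_of_le ht.1 ▸ hs)))).congr_deriv ?_
    ring
  rw [expPicard_sub hA hγ hγC ht]
  refine (norm_exp_neg_smul_integral_le ht.1 (hb.mono hsub) hpoint).trans_eq ?_
  rw [integral_eq_sub_of_hasDerivAt hderiv ?_, hg0, mul_zero, sub_zero, ← mul_assoc, ← exp_add,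
    neg_add_cancel, exp_zero, one_mul]
  refine ContinuousOn.intervalIntegrable_of_Icc ht.1 ?_
  exact (by fun_prop : Continuous fun s => exp (κ * s)).continuousOn.mul (hb.mono hsub)

theorem expPicard_mem [CompleteSpace E] (hconv : Convex ℝ C) (hC : IsClosed C) (hκ : 0 < κ)
    (hx₀ : x₀ ∈ C) (hA : ContinuousOn (uncurry A) (Icc 0 T ×ˢ C)) (hγ : ContinuousOn γ (Icc 0 T))
    (hγC : MapsTo γ (Icc 0 T) C) (hγA : ∀ s ∈ Icc 0 T, γ s + κ⁻¹ • A s (γ s) ∈ C)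
    {t : ℝ} (ht : t ∈ Icc 0 T) : expPicard κ A x₀ γ t ∈ C := by
  have hsub : Icc 0 t ⊆ Icc 0 T := Icc_subset_Icc_right ht.2
  convert hconv.exp_neg_smul_add_integral_mem hC hκ.le ht.1 hx₀
    ((hγ.add ((ODE.continuousOn_comp (f := A) hA hγ hγC).const_smul κ⁻¹)).mono hsub)
    (fun s hs => hγA s (hsub hs)) using 1
  rw [expPicard, ODE.picard_apply]
  congr 2
  refine integral_congr fun s _ => ?_
  simp only [Pi.add_apply, Pi.smul_apply, smul_add, smul_smul]
  rw [mul_right_comm, mul_inv_cancel₀ hκ.ne', one_mul, mul_comm]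

end

def brezisCurves (C : Set E) (T L M : ℝ) (x₀ : E) : Set C(Icc 0 T, E) :=
  {γ | ∀ t, γ t ∈ C ∧ ‖γ t - x₀‖ ≤ M * t * exp (L * t)}

structure IsBrezisSystem (C : Set E) (T L M κ : ℝ) (A : ℝ → E → E) (x₀ : E) : Prop where
  isClosed : IsClosed C
  convex : Convex ℝ C
  mem : x₀ ∈ C
  nonneg_T : 0 ≤ T
  nonneg_L : 0 ≤ L
  pos_κ : 0 < κ
  continuousOn : ContinuousOn (uncurry A) (Icc 0 T ×ˢ C)
  lipschitz : ∀ t ∈ Icc 0 T, ∀ x ∈ C, ∀ y ∈ C, ‖A t x - A t y‖ ≤ L * ‖x - y‖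
  norm_le : ∀ t ∈ Icc 0 T, ‖A t x₀‖ ≤ M
  add_inv_smul_mem : ∀ t ∈ Icc 0 T, ∀ x ∈ C, ‖x‖ ≤ ‖x₀‖ + M * T * exp (L * T) →
    x + κ⁻¹ • A t x ∈ C

namespace IsBrezisSystem

variable {C : Set E} {T L M κ : ℝ} {A : ℝ → E → E} {x₀ : E}

theorem nonneg_M (h : IsBrezisSystem C T L M κ A x₀) : 0 ≤ M :=
  (norm_nonneg _).trans (h.norm_le 0 (left_mem_Icc.2 h.nonneg_T))

theorem norm_le_add_mul (h : IsBrezisSystem C T L M κ A x₀) {t : ℝ} (ht : t ∈ Icc 0 T)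
    {x : E} (hx : x ∈ C) : ‖A t x‖ ≤ M + L * ‖x - x₀‖ :=
  calc ‖A t x‖ ≤ ‖A t x₀‖ + ‖A t x - A t x₀‖ := norm_le_norm_add_norm_sub' _ _
    _ ≤ M + L * ‖x - x₀‖ := add_le_add (h.norm_le t ht) (h.lipschitz t ht x hx x₀ h.mem)

theorem isClosed_brezisCurves (h : IsBrezisSystem C T L M κ A x₀) :
    IsClosed (brezisCurves C T L M x₀) := by
  simp only [brezisCurves, ofPred_forall, ofPred_and]
  exact isClosed_iInter fun t => (h.isClosed.preimage (continuous_eval_const t)).inter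
    (isClosed_le ((continuous_eval_const t).sub continuous_const).norm continuous_const)

theorem extend_mem (h : IsBrezisSystem C T L M κ A x₀) {γ : C(Icc 0 T, E)}
    (hγ : γ ∈ brezisCurves C T L M x₀) (t : ℝ) : ContinuousMap.IccExtend h.nonneg_T γ t ∈ C :=
  (hγ _).1

theorem norm_extend_sub_le (h : IsBrezisSystem C T L M κ A x₀) {γ : C(Icc 0 T, E)}
    (hγ : γ ∈ brezisCurves C T L M x₀) {t : ℝ} (ht : t ∈ Icc 0 T) :
    ‖ContinuousMap.IccExtend h.nonneg_T γ t - x₀‖ ≤ M * t * exp (L * t) := by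
  simpa [IccExtend_of_mem _ _ ht] using (hγ ⟨t, ht⟩).2

theorem expPicard_extend_mem_brezisCurves [CompleteSpace E] (h : IsBrezisSystem C T L M κ A x₀)
    {γ : C(Icc 0 T, E)} (hγ : γ ∈ brezisCurves C T L M x₀) {t : ℝ} (ht : t ∈ Icc 0 T) :
    expPicard κ A x₀ (ContinuousMap.IccExtend h.nonneg_T γ) t ∈ C ∧
      ‖expPicard κ A x₀ (ContinuousMap.IccExtend h.nonneg_T γ) t - x₀‖ ≤ M * t * exp (L * t) := by
  set c := ContinuousMap.IccExtend h.nonneg_T γ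
  have hc : ContinuousOn c (Icc 0 T) := c.continuous.continuousOn
  have hcC : MapsTo c (Icc 0 T) C := fun s _ => h.extend_mem hγ s
  constructor
  · refine expPicard_mem h.convex h.isClosed h.pos_κ h.mem h.continuousOn hc hcC (fun s hs => ?_) ht
    refine h.add_inv_smul_mem s hs _ (hcC hs) ?_
    calc ‖c s‖ ≤ ‖x₀‖ + ‖c s - x₀‖ := norm_le_norm_add_norm_sub' _ _
      _ ≤ ‖x₀‖ + M * s * exp (L * s) := by grw [h.norm_extend_sub_le hγ hs]
      _ ≤ ‖x₀‖ + M * T * exp (L * T) := by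
        have hM := h.nonneg_M
        have hexp : exp (L * s) ≤ exp (L * T) :=
          exp_le_exp.2 (mul_le_mul_of_nonneg_left hs.2 h.nonneg_L)
        gcongr
        exacts [mul_nonneg hM h.nonneg_T, hs.2]
  · refine norm_expPicard_sub_le h.pos_κ.le h.continuousOn hc hcC
      (fun s _ => hasDerivAt_mul_mul_exp M L s) (by fun_prop) (by simp)
      (fun s hs => h.norm_extend_sub_le hγ hs) (fun s hs => ?_) ht
    calc ‖A s (c s)‖ ≤ M + L * ‖c s - x₀‖ := h.norm_le_add_mul hs (hcC hs)
      _ ≤ M * exp (L * s) + L * (M * s * exp (L * s)) := by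
        gcongr
        · exact le_mul_of_one_le_right h.nonneg_M (one_le_exp (mul_nonneg h.nonneg_L hs.1))
        · exact h.nonneg_L
        · exact h.norm_extend_sub_le hγ hs

variable [CompleteSpace E]

theorem continuousOn_expPicard_extend (h : IsBrezisSystem C T L M κ A x₀) {γ : C(Icc 0 T, E)}
    (hγ : γ ∈ brezisCurves C T L M x₀) :
    ContinuousOn (expPicard κ A x₀ (ContinuousMap.IccExtend h.nonneg_T γ)) (Icc 0 T) :=
  fun _ ht => (hasDerivWithinAt_expPicard h.continuousOn (ContinuousMap.continuous _).continuousOn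
    (fun s _ => h.extend_mem hγ s) ht).continuousWithinAt

noncomputable def next (h : IsBrezisSystem C T L M κ A x₀) (γ : brezisCurves C T L M x₀) :
    brezisCurves C T L M x₀ :=
  ⟨⟨(Icc 0 T).domRestrict (expPicard κ A x₀ (ContinuousMap.IccExtend h.nonneg_T γ.1)),
    (h.continuousOn_expPicard_extend γ.2).domRestrict⟩,
    fun t => h.expPicard_extend_mem_brezisCurves γ.2 t.2⟩

theorem extend_next_of_mem (h : IsBrezisSystem C T L M κ A x₀) (γ : brezisCurves C T L M x₀)
    {t : ℝ} (ht : t ∈ Icc 0 T) :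
    ContinuousMap.IccExtend h.nonneg_T (h.next γ).1 t =
      expPicard κ A x₀ (ContinuousMap.IccExtend h.nonneg_T γ.1) t := by
  simp [IccExtend_of_mem _ _ ht, next]

theorem dist_iterate_next_le (h : IsBrezisSystem C T L M κ A x₀) (n : ℕ)
    (γ₁ γ₂ : brezisCurves C T L M x₀) :
    dist (h.next^[n] γ₁) (h.next^[n] γ₂) ≤ ((κ + L) * T) ^ n / n ! * dist γ₁ γ₂ := by
  have hK : 0 ≤ κ + L := add_nonneg h.pos_κ.le h.nonneg_L
  set u : ℕ → ℝ → ℝ := fun n t => ‖ContinuousMap.IccExtend h.nonneg_T (h.next^[n] γ₁).1 t -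
    ContinuousMap.IccExtend h.nonneg_T (h.next^[n] γ₂).1 t‖
  have h0 : ∀ t ∈ Icc 0 T, u 0 t ≤ dist γ₁ γ₂ := fun t ht => by
    simp only [u, Function.iterate_zero, id, ContinuousMap.coe_IccExtend, IccExtend_of_mem _ _ ht,
      ← dist_eq_norm]
    exact ContinuousMap.dist_apply_le_dist _
  have hsucc : ∀ n, ∀ t ∈ Icc 0 T, u (n + 1) t ≤ (κ + L) * ∫ s in 0..t, u n s := fun n t ht => by
    simp only [u, Function.iterate_succ_apply', h.extend_next_of_mem _ ht]
    exact norm_expPicard_sub_expPicard_le h.pos_κ.le h.continuousOn h.lipschitz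
      (ContinuousMap.continuous _).continuousOn (fun s _ => h.extend_mem (h.next^[n] γ₁).2 s)
      (ContinuousMap.continuous _).continuousOn (fun s _ => h.extend_mem (h.next^[n] γ₂).2 s) ht
  have hu := le_pow_div_factorial_mul_of_le_integral hK (fun n => by fun_prop) h0 hsucc n
  rw [Subtype.dist_eq, ContinuousMap.dist_le (by have := h.nonneg_T; positivity)]
  intro t
  calc dist ((h.next^[n] γ₁).1 t) ((h.next^[n] γ₂).1 t) = u n t := by
        simp [u, dist_eq_norm, IccExtend_val]
    _ ≤ ((κ + L) * t) ^ n / n ! * dist γ₁ γ₂ := hu t t.2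
    _ ≤ ((κ + L) * T) ^ n / n ! * dist γ₁ γ₂ := by
      have := t.2.1
      gcongr
      exact t.2.2

theorem exists_isFixedPt_next (h : IsBrezisSystem C T L M κ A x₀) : ∃ γ, IsFixedPt h.next γ :=
  have : CompleteSpace (brezisCurves C T L M x₀) :=
    h.isClosed_brezisCurves.completeSpace_coe
  have : Nonempty (brezisCurves C T L M x₀) := ⟨⟨ContinuousMap.const _ x₀, fun t =>
    ⟨h.mem, by simpa using mul_nonneg (mul_nonneg h.nonneg_M t.2.1) (exp_pos _).le⟩⟩⟩
  exists_isFixedPt_of_dist_iterate_le (FloorSemiring.tendsto_pow_div_factorial_atTop _)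
    h.dist_iterate_next_le

theorem exists_isBrezisSol (h : IsBrezisSystem C T L M κ A x₀) :
    ∃ c, c 0 = x₀ ∧ IsBrezisSol C T A c := by
  obtain ⟨γ, hγ⟩ := h.exists_isFixedPt_next
  set c := ContinuousMap.IccExtend h.nonneg_T γ.1
  have hcC : MapsTo c (Icc 0 T) C := fun s _ => h.extend_mem γ.2 s
  have hfix : ∀ t ∈ Icc 0 T, expPicard κ A x₀ c t = c t := fun t ht => by
    rw [← h.extend_next_of_mem γ ht, hγ]
  refine ⟨c, ?_, hcC, c.continuous.continuousOn, fun t ht => ?_⟩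
  · rw [← hfix 0 (left_mem_Icc.2 h.nonneg_T), expPicard_zero]
  · have hderiv := hasDerivWithinAt_expPicard (κ := κ) (x₀ := x₀) h.continuousOn
      c.continuous.continuousOn hcC ht
    rw [hfix t ht, sub_self, smul_zero, zero_add] at hderiv
    exact hderiv.congr (fun s hs => (hfix s hs).symm) (hfix t ht).symm

end IsBrezisSystem

theorem exists_isBrezisSystem {C : Set E} {T L : ℝ} {A : ℝ → E → E} {x₀ : E} (hC : IsClosed C)
    (hconv : Convex ℝ C) (hx₀ : x₀ ∈ C) (hT : 0 ≤ T) (hL : 0 ≤ L)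
    (hlip : ∀ t ∈ Icc 0 T, ∀ x ∈ C, ∀ y ∈ C, ‖A t x - A t y‖ ≤ L * ‖x - y‖)
    (hcont : ∀ x ∈ C, ContinuousOn (fun t => A t x) (Icc 0 T))
    (hsub : ∀ R > (0 : ℝ), ∃ θ > (0 : ℝ), ∀ t ∈ Icc 0 T, ∀ x ∈ C, ‖x‖ ≤ R → x + θ • A t x ∈ C) :
    ∃ M κ, IsBrezisSystem C T L M κ A x₀ := by
  obtain ⟨M, hM⟩ := isCompact_Icc.exists_bound_of_continuousOn (hcont x₀ hx₀)
  have hM0 : 0 ≤ M := (norm_nonneg _).trans (hM 0 (left_mem_Icc.2 hT))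
  obtain ⟨θ, hθ, hθC⟩ := hsub (‖x₀‖ + M * T * exp (L * T) + 1) (by positivity)
  refine ⟨M, θ⁻¹, hC, hconv, hx₀, hT, hL, inv_pos.2 hθ, ?_, hlip, hM, fun t ht x hx hxR => ?_⟩
  · exact continuousOn_prod_of_continuousOn_lipschitzOnWith' (uncurry A) L.toNNReal
      (fun t ht => lipschitzOnWith_toNNReal_of_norm_sub_le (hlip t ht)) hcont
  · rw [inv_inv]
    exact hθC t ht x hx (by linarith)

end

theorem stmt15_general {E : Type*} [NormedAddCommGroup E] [NormedSpace ℝ E]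
    [CompleteSpace E]
    (C : Set E) (hC : IsClosed C) (hconv : Convex ℝ C)
    (T L : ℝ) (hT : 0 ≤ T) (hL : 0 ≤ L)
    (A : ℝ → E → E)
    (h1 : ∀ t ∈ Set.Icc 0 T, ∀ c₁ ∈ C, ∀ c₂ ∈ C,
      ‖A t c₁ - A t c₂‖ ≤ L * ‖c₁ - c₂‖)
    (h2 : ∀ c ∈ C, ContinuousOn (fun t => A t c) (Set.Icc 0 T))
    (h3 : ∀ R > (0 : ℝ), ∃ θ > (0 : ℝ), ∀ t ∈ Set.Icc 0 T, ∀ c ∈ C,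
      ‖c‖ ≤ R → c + θ • A t c ∈ C) :
    (∀ cbar ∈ C, ∃ c : ℝ → E, (c 0 = cbar ∧ IsBrezisSol C T A c) ∧
      ∀ c' : ℝ → E, c' 0 = cbar → IsBrezisSol C T A c' →
        Set.EqOn c c' (Set.Icc 0 T)) ∧
    (∀ c₁ c₂ : ℝ → E, IsBrezisSol C T A c₁ → IsBrezisSol C T A c₂ →
      ∀ t ∈ Set.Icc 0 T,
        ‖c₁ t - c₂ t‖ ≤ Real.exp (L * t) * ‖c₁ 0 - c₂ 0‖) := by
  refine ⟨fun cbar hcbar => ?_, fun c₁ c₂ hc₁ hc₂ t ht => hc₁.norm_sub_le hL h1 hc₂ ht⟩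
  obtain ⟨M, κ, hsys⟩ := exists_isBrezisSystem hC hconv hcbar hT hL h1 h2 h3
  obtain ⟨c, hc0, hc⟩ := hsys.exists_isBrezisSol
  refine ⟨c, ⟨hc0, hc⟩, fun c' hc'0 hc' t ht => ?_⟩
  have hgronwall := hc.norm_sub_le hL h1 hc' ht
  rwa [hc0, hc'0, sub_self, norm_zero, mul_zero, norm_le_zero_iff, sub_eq_zero] at hgronwall

/-- Brezis' well-posedness theorem for ODEs in a closed convex subset `C` of a
Banach space: under uniform Lipschitz continuity in `c`, continuity in `t`, and the
subtangentiality condition, for every initial datum `c̄ ∈ C` there is a unique `C¹`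
solution with values in `C`; and any two solutions satisfy
`‖c¹_t − c²_t‖ ≤ e^{Lt}‖c¹_0 − c²_0‖`. -/
theorem stmt15 {E : Type*} [NormedAddCommGroup E] [NormedSpace ℝ E]
    [CompleteSpace E]
    (C : Set E) (hC : IsClosed C) (hconv : Convex ℝ C) (hCne : C.Nonempty)
    (T L : ℝ) (hT : 0 ≤ T) (hL : 0 ≤ L)
    (A : ℝ → E → E)
    (h1 : ∀ t ∈ Set.Icc 0 T, ∀ c₁ ∈ C, ∀ c₂ ∈ C,
      ‖A t c₁ - A t c₂‖ ≤ L * ‖c₁ - c₂‖)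
    (h2 : ∀ c ∈ C, ContinuousOn (fun t => A t c) (Set.Icc 0 T))
    (h3 : ∀ R > (0 : ℝ), ∃ θ > (0 : ℝ), ∀ t ∈ Set.Icc 0 T, ∀ c ∈ C,
      ‖c‖ ≤ R → c + θ • A t c ∈ C) :
    (∀ cbar ∈ C, ∃ c : ℝ → E, (c 0 = cbar ∧ IsBrezisSol C T A c) ∧
      ∀ c' : ℝ → E, c' 0 = cbar → IsBrezisSol C T A c' →
        Set.EqOn c c' (Set.Icc 0 T)) ∧
    (∀ c₁ c₂ : ℝ → E, IsBrezisSol C T A c₁ → IsBrezisSol C T A c₂ →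
      ∀ t ∈ Set.Icc 0 T,
        ‖c₁ t - c₂ t‖ ≤ Real.exp (L * t) * ‖c₁ 0 - c₂ 0‖) :=
  stmt15_general C hC hconv T L hT hL A h1 h2 h3
end

section
/- Let U be compact metric, C = ℝ^d × P(U) ⊂ Y = ℝ^d × F(U), and J : (ℝ^d × U)² → ℝ L_J-Lipschitz. Define f_σ(x, σ, x', σ') = (∫_U J(x,·,x',u') dσ'(u') − ∫_{U×U} J(x,w,x',u') dσ'(u')dσ(w)) σ. Then for every θ with 0 < θ ≤ (L_J · diam U)^{-1} and all (x,σ), (x',σ') ∈ C, the measure σ + θ f_σ(x,σ,x',σ') is again a Borel probability measure on U. -/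
open MeasureTheory

/-- The replicator interaction term preserves probability measures: if `J` is
`L_J`-Lipschitz and `0 < θ ≤ (L_J·diam U)⁻¹`, then for every `(x,σ), (x',σ')` the
measure `σ + θ f_σ(x,σ,x',σ')`, which has density
`1 + θ(∫ J(x,·,x',u')dσ'(u') − ∫∫ J(x,w,x',u')dσ'(u')dσ(w))` w.r.t. `σ`,
is again a Borel probability measure on `U`. -/
theorem stmt16 {U : Type*} [MetricSpace U] [CompactSpace U]
    [MeasurableSpace U] [BorelSpace U] {d : ℕ}
    (J : (EuclideanSpace ℝ (Fin d) × U) → (EuclideanSpace ℝ (Fin d) × U) → ℝ)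
    (LJ : NNReal)
    (hJ : LipschitzWith LJ
      (fun p : (EuclideanSpace ℝ (Fin d) × U) × (EuclideanSpace ℝ (Fin d) × U) =>
        J p.1 p.2))
    (θ : ℝ) (hθ : 0 < θ)
    (hθ' : θ * ((LJ : ℝ) * Metric.diam (Set.univ : Set U)) ≤ 1)
    (x x' : EuclideanSpace ℝ (Fin d)) (σ σ' : Measure U)
    [IsProbabilityMeasure σ] [IsProbabilityMeasure σ'] :
    (∀ u : U, 0 ≤ 1 + θ * ((∫ u', J (x, u) (x', u') ∂σ') -
        ∫ w, ∫ u', J (x, w) (x', u') ∂σ' ∂σ)) ∧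
    IsProbabilityMeasure (σ.withDensity fun u =>
      ENNReal.ofReal (1 + θ * ((∫ u', J (x, u) (x', u') ∂σ') -
        ∫ w, ∫ u', J (x, w) (x', u') ∂σ' ∂σ))) := by

  have hJc : Continuous fun p : (EuclideanSpace ℝ (Fin d) × U) × (EuclideanSpace ℝ (Fin d) × U) => J p.1 p.2 := hJ.continuous
  set h : U → ℝ := fun u => ∫ u', J (x, u) (x', u') ∂σ' with hh
  have hInt' : ∀ a : U, Integrable (fun u' => J (x, a) (x', u')) σ' := by
    intro a
    exact integrableOn_univ.mp (((hJc.comp (by continuity : Continuous fun u' : U => ((((x, a), (x', u'))) : (EuclideanSpace ℝ (Fin d) × U) × (EuclideanSpace ℝ (Fin d) × U)))).continuousOn).integrableOn_compact isCompact_univ)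
  have hLip : LipschitzWith LJ h := by
    refine LipschitzWith.of_dist_le_mul fun a b => ?_
    have key : ∀ u' : U, |J (x, a) (x', u') - J (x, b) (x', u')| ≤ (LJ : ℝ) * dist a b := by
      intro u'
      have := hJ.dist_le_mul ((x, a), (x', u')) ((x, b), (x', u'))
      simp only [Prod.dist_eq, dist_self] at this
      calc |J (x, a) (x', u') - J (x, b) (x', u')| = dist (J (x, a) (x', u')) (J (x, b) (x', u')) := (Real.dist_eq _ _).symm
        _ ≤ (LJ : ℝ) * dist a b := by
            refine this.trans ?_
            gcongr
            simp [dist_nonneg]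
    calc dist (h a) (h b) = |∫ u', (J (x, a) (x', u') - J (x, b) (x', u')) ∂σ'| := by
          rw [Real.dist_eq, integral_sub (hInt' a) (hInt' b)]
      _ ≤ ∫ u', |J (x, a) (x', u') - J (x, b) (x', u')| ∂σ' := by
          simpa using norm_integral_le_integral_norm (fun u' => J (x, a) (x', u') - J (x, b) (x', u'))
      _ ≤ ∫ _u' : U, (LJ : ℝ) * dist a b ∂σ' := integral_mono ((hInt' a).sub (hInt' b)).abs (integrable_const _) key
      _ = (LJ : ℝ) * dist a b := by simp
  have hIntσ : Integrable h σ := integrableOn_univ.mp (hLip.continuous.continuousOn.integrableOn_compact isCompact_univ)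
  set c : ℝ := ∫ w, h w ∂σ with hc
  have hM : ∀ u : U, c ≤ h u + (LJ : ℝ) * Metric.diam (Set.univ : Set U) := by
    intro u
    have : ∀ w : U, h w ≤ h u + (LJ : ℝ) * Metric.diam (Set.univ : Set U) := by
      intro w
      have h1 : dist (h w) (h u) ≤ (LJ : ℝ) * dist w u := hLip.dist_le_mul w u
      have h2 : dist w u ≤ Metric.diam (Set.univ : Set U) :=
        Metric.dist_le_diam_of_mem isCompact_univ.isBounded (Set.mem_univ w) (Set.mem_univ u)
      have h3 : h w - h u ≤ dist (h w) (h u) := by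
        rw [Real.dist_eq]; exact le_abs_self _
      nlinarith [LJ.coe_nonneg]
    calc c ≤ ∫ _w : U, (h u + (LJ : ℝ) * Metric.diam (Set.univ : Set U)) ∂σ :=
          integral_mono hIntσ (integrable_const _) this
      _ = h u + (LJ : ℝ) * Metric.diam (Set.univ : Set U) := by simp
  have hnn : ∀ u : U, 0 ≤ 1 + θ * (h u - c) := by
    intro u
    have h1 : -((LJ : ℝ) * Metric.diam (Set.univ : Set U)) ≤ h u - c := by
      have := hM u; linarith
    nlinarith [mul_le_mul_of_nonneg_left h1 hθ.le]
  refine ⟨hnn, ?_⟩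
  have hIntg : Integrable (fun u => 1 + θ * (h u - c)) σ :=
    (integrable_const 1).add ((hIntσ.sub (integrable_const c)).const_mul θ)
  constructor
  rw [withDensity_apply _ MeasurableSet.univ, Measure.restrict_univ]
  have : ∫⁻ u, ENNReal.ofReal (1 + θ * (h u - c)) ∂σ
      = ENNReal.ofReal (∫ u, (1 + θ * (h u - c)) ∂σ) := by
    rw [ofReal_integral_eq_lintegral_ofReal hIntg (Filter.Eventually.of_forall hnn)]
  have i1 : Integrable (fun u : U => θ * (h u - c)) σ := by
    simpa using (hIntσ.sub (integrable_const c)).const_mul θ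
  have h2 : ∫ u, θ * (h u - c) ∂σ = θ * (c - c) := by
    rw [integral_const_mul, integral_sub hIntσ (integrable_const c), integral_const]
    simp [← hc]
  rw [this, integral_add (integrable_const 1) i1, h2]
  simp
end
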